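/- Let (H, M) be a Banach module and let G be a Banach space continuously embedded in H such that for each M ∈ M the restriction of M to G is a compact operator from G to H. If R ∈ B₀ˡ(H,H) and the range of R is contained in G, then R is a compact operator on H. -/

import Mathlib

open ContinuousLinearMap

noncomputable section

variable {H K : Type*}

/-- `M` is the multiplier algebra of a Banach module structure on `H`: a non-degenerate
norm-closed subalgebra of `B(H)` possessing a bounded approximate unit. -/
structure IsBanachModule (H : Type*) [NormedAddCommGroup H] [NormedSpace ℂ H]
    (M : Set (H →L[ℂ] H)) : Prop where
  zero_mem : (0 : H →L[ℂ] H) ∈ M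
  add_mem : ∀ {A B : H →L[ℂ] H}, A ∈ M → B ∈ M → A + B ∈ M
  smul_mem : ∀ (c : ℂ) {A : H →L[ℂ] H}, A ∈ M → c • A ∈ M
  mul_mem : ∀ {A B : H →L[ℂ] H}, A ∈ M → B ∈ M → A.comp B ∈ M
  isClosed : IsClosed M
  nondegenerate : Dense (↑(Submodule.span ℂ {u : H | ∃ A ∈ M, ∃ v : H, u = A v}) : Set H)
  approx_unit : ∃ C : ℝ, ∀ ε > (0 : ℝ), ∀ F : Finset (H →L[ℂ] H), ↑F ⊆ M →
    ∃ J ∈ M, ‖J‖ ≤ C ∧ ∀ A ∈ F, ‖J.comp A - A‖ ≤ ε ∧ ‖A.comp J - A‖ ≤ ε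

/-- A Hilbert module: a Banach module on a Hilbert space whose multiplier algebra is a
C*-algebra of operators (i.e. is moreover closed under adjoints). -/
structure IsHilbertModule (H : Type*) [NormedAddCommGroup H] [InnerProductSpace ℂ H]
    [CompleteSpace H] (M : Set (H →L[ℂ] H)) extends IsBanachModule H M : Prop where
  star_mem : ∀ {A : H →L[ℂ] H}, A ∈ M → ContinuousLinearMap.adjoint A ∈ M

/-- `B₀ˡ(H,K)`: the closed linear span of the operators `A ∘ T` with `A` in the multiplier
algebra of `K` and `T ∈ B(H,K)` (operators left vanishing at infinity). -/
def B0l [NormedAddCommGroup H] [NormedSpace ℂ H] [NormedAddCommGroup K] [NormedSpace ℂ K]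
    (MK : Set (K →L[ℂ] K)) : Set (H →L[ℂ] K) :=
  closure (↑(Submodule.span ℂ
    {S : H →L[ℂ] K | ∃ A ∈ MK, ∃ T : H →L[ℂ] K, S = A.comp T}) : Set (H →L[ℂ] K))

/-- `B₀ʳ(H,K)`: the closed linear span of the operators `T ∘ A` with `A` in the multiplier
algebra of `H` and `T ∈ B(H,K)` (operators right vanishing at infinity). -/
def B0r [NormedAddCommGroup H] [NormedSpace ℂ H] [NormedAddCommGroup K] [NormedSpace ℂ K]
    (MH : Set (H →L[ℂ] H)) : Set (H →L[ℂ] K) :=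
  closure (↑(Submodule.span ℂ
    {S : H →L[ℂ] K | ∃ A ∈ MH, ∃ T : H →L[ℂ] K, S = T.comp A}) : Set (H →L[ℂ] K))

/-- `S ∈ B(H,K)` is left decay preserving. -/
def LeftDecayPreserving [NormedAddCommGroup H] [NormedSpace ℂ H] [NormedAddCommGroup K]
    [NormedSpace ℂ K] (MH : Set (H →L[ℂ] H)) (MK : Set (K →L[ℂ] K))
    (S : H →L[ℂ] K) : Prop :=
  ∀ A ∈ MH, S.comp A ∈ B0l MK

/-- `S ∈ B(H,K)` is right decay preserving. -/
def RightDecayPreserving [NormedAddCommGroup H] [NormedSpace ℂ H] [NormedAddCommGroup K]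
    [NormedSpace ℂ K] (MH : Set (H →L[ℂ] H)) (MK : Set (K →L[ℂ] K))
    (S : H →L[ℂ] K) : Prop :=
  ∀ A ∈ MK, A.comp S ∈ B0r MH

/-!
A bounded left approximate unit `J` of `M` satisfies `J ∘ S ≈ S` uniformly on the finite sums
`S = ∑ Aⱼ ∘ Tⱼ` with `Aⱼ ∈ M`, hence `J ∘ R ≈ R` for every `R ∈ B₀ˡ`. If `R` takes values in `G`,
the closed graph theorem factors it as `R = i ∘ F` with `F : H → G` bounded, so each `J ∘ R =
(J ∘ i) ∘ F` is compact, and `R` is a norm limit of compact operators.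
-/

section ApproxUnit

variable [NormedAddCommGroup H] [NormedSpace ℂ H] [NormedAddCommGroup K] [NormedSpace ℂ K]

def HasLeftApproxUnitBoundedBy (M : Set (K →L[ℂ] K)) (C : ℝ) : Prop :=
  ∀ ε > (0 : ℝ), ∀ F : Finset (K →L[ℂ] K), ↑F ⊆ M →
    ∃ J ∈ M, ‖J‖ ≤ C ∧ ∀ A ∈ F, ‖J.comp A - A‖ ≤ ε

variable {M : Set (K →L[ℂ] K)} {C : ℝ}

theorem IsBanachModule.exists_hasLeftApproxUnitBoundedBy (hM : IsBanachModule K M) :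
    ∃ C, HasLeftApproxUnitBoundedBy M C := by
  obtain ⟨C, hC⟩ := hM.approx_unit
  refine ⟨C, fun ε hε F hF => ?_⟩
  obtain ⟨J, hJ, hJC, hJF⟩ := hC ε hε F hF
  exact ⟨J, hJ, hJC, fun A hA => (hJF A hA).1⟩

theorem HasLeftApproxUnitBoundedBy.nonneg (hM : HasLeftApproxUnitBoundedBy M C) : 0 ≤ C := by
  obtain ⟨J, -, hJC, -⟩ := hM 1 one_pos ∅ (by simp)
  exact (norm_nonneg J).trans hJC

theorem exists_sum_comp_eq_of_mem_span {S : H →L[ℂ] K}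
    (hS : S ∈ Submodule.span ℂ {S : H →L[ℂ] K | ∃ A ∈ M, ∃ T : H →L[ℂ] K, S = A.comp T}) :
    ∃ (n : ℕ) (A : Fin n → K →L[ℂ] K) (T : Fin n → H →L[ℂ] K),
      (∀ j, A j ∈ M) ∧ S = ∑ j, (A j).comp (T j) := by
  obtain ⟨n, c, g, rfl⟩ := Submodule.mem_span_set'.mp hS
  choose A hA T hT using fun j => (g j).2
  refine ⟨n, A, fun j => c j • T j, hA, Finset.sum_congr rfl fun j _ => ?_⟩
  rw [hT j, comp_smul]

theorem HasLeftApproxUnitBoundedBy.exists_norm_comp_sub_le (hM : HasLeftApproxUnitBoundedBy M C)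
    {S : H →L[ℂ] K}
    (hS : S ∈ Submodule.span ℂ {S : H →L[ℂ] K | ∃ A ∈ M, ∃ T : H →L[ℂ] K, S = A.comp T})
    {δ : ℝ} (hδ : 0 < δ) : ∃ J ∈ M, ‖J‖ ≤ C ∧ ‖J.comp S - S‖ ≤ δ := by
  classical
  obtain ⟨n, A, T, hA, rfl⟩ := exists_sum_comp_eq_of_mem_span hS
  set t := ∑ j, ‖T j‖
  have ht : 0 ≤ t := Finset.sum_nonneg fun j _ => norm_nonneg _
  obtain ⟨J, hJ, hJC, hJA⟩ := hM (δ / (t + 1)) (by positivity) (Finset.univ.image A)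
    (by simpa [Set.range_subset_iff] using hA)
  refine ⟨J, hJ, hJC, ?_⟩
  calc ‖J.comp (∑ j, (A j).comp (T j)) - ∑ j, (A j).comp (T j)‖
      = ‖∑ j, (J.comp (A j) - A j).comp (T j)‖ := by
        simp only [comp_finsetSum, sub_comp, Finset.sum_sub_distrib, comp_assoc]
    _ ≤ ∑ j, δ / (t + 1) * ‖T j‖ := by
        refine norm_sum_le_of_le _ fun j _ => (opNorm_comp_le _ _).trans ?_
        gcongr
        exact hJA _ (Finset.mem_image_of_mem A (Finset.mem_univ j))
    _ = δ * (t / (t + 1)) := by rw [← Finset.mul_sum]; ring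
    _ ≤ δ := mul_le_of_le_one_right hδ.le ((div_le_one (by positivity)).mpr (by linarith))

theorem HasLeftApproxUnitBoundedBy.mem_closure_image_comp_of_mem_B0l
    (hM : HasLeftApproxUnitBoundedBy M C) {R : H →L[ℂ] K} (hR : R ∈ B0l M) :
    R ∈ closure ((fun J => J.comp R) '' M) := by
  have hC := hM.nonneg
  rw [Metric.mem_closure_iff]
  intro ε hε
  obtain ⟨S, hS, hRS⟩ := Metric.mem_closure_iff.mp hR (ε / (2 * (C + 1))) (by positivity)
  obtain ⟨J, hJ, hJC, hJS⟩ := hM.exists_norm_comp_sub_le hS (half_pos hε)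
  refine ⟨J.comp R, ⟨J, hJ, rfl⟩, ?_⟩
  rw [dist_eq_norm] at hRS ⊢
  have hJRS : ‖J.comp (S - R)‖ ≤ C * ‖R - S‖ := by
    rw [norm_sub_rev R S]
    exact (opNorm_comp_le _ _).trans (by gcongr)
  calc ‖R - J.comp R‖ = ‖(R - S) - (J.comp S - S) + J.comp (S - R)‖ := by
        rw [comp_sub]; abel_nf
    _ ≤ ‖R - S‖ + ‖J.comp S - S‖ + ‖J.comp (S - R)‖ := norm_add_le_of_le (norm_sub_le _ _) le_rfl
    _ ≤ (C + 1) * ‖R - S‖ + ε / 2 := by linarith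
    _ < (C + 1) * (ε / (2 * (C + 1))) + ε / 2 := by gcongr
    _ = ε := by field_simp; ring

end ApproxUnit

theorem ContinuousLinearMap.exists_comp_eq_of_forall_exists_eq {𝕜 E F G : Type*}
    [NontriviallyNormedField 𝕜] [NormedAddCommGroup E] [NormedSpace 𝕜 E] [CompleteSpace E]
    [NormedAddCommGroup F] [NormedSpace 𝕜 F] [NormedAddCommGroup G] [NormedSpace 𝕜 G]
    [CompleteSpace G] {i : G →L[𝕜] F} (hi : Function.Injective i) {R : E →L[𝕜] F}
    (hR : ∀ v, ∃ g, i g = R v) : ∃ L : E →L[𝕜] G, i.comp L = R := by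
  let L : E →ₗ[𝕜] G := (LinearEquiv.ofInjective (i : G →ₗ[𝕜] F) hi).symm.toLinearMap ∘ₗ
    (R : E →ₗ[𝕜] F).codRestrict _ hR
  have hiL : ∀ v, i (L v) = R v := fun v =>
    LinearEquiv.ofInjective_symm_apply (h := hi) _ _
  have hgraph : (L.graph : Set (E × G)) = {p | i p.2 = R p.1} := by
    ext p
    simp only [SetLike.mem_coe, LinearMap.mem_graph_iff, Set.mem_ofPred_eq, ← hiL]
    exact hi.eq_iff.symm
  refine ⟨ContinuousLinearMap.ofIsClosedGraph (g := L) ?_, ext hiL⟩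
  rw [hgraph]
  exact isClosed_eq (by fun_prop) (by fun_prop)

theorem stmt1 {H G : Type*} [NormedAddCommGroup H] [NormedSpace ℂ H] [CompleteSpace H]
    [NormedAddCommGroup G] [NormedSpace ℂ G] [CompleteSpace G]
    (M : Set (H →L[ℂ] H)) (hM : IsBanachModule H M)
    (i : G →L[ℂ] H) (hi : Function.Injective i)
    (hcomp : ∀ A ∈ M, IsCompactOperator (⇑(A.comp i)))
    (R : H →L[ℂ] H) (hR : R ∈ B0l (H := H) M)
    (hran : ∀ v : H, ∃ g : G, i g = R v) :
    IsCompactOperator (⇑R) := by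
  obtain ⟨C, hMC⟩ := hM.exists_hasLeftApproxUnitBoundedBy
  obtain ⟨F, rfl⟩ := exists_comp_eq_of_forall_exists_eq hi hran
  have hJR : (fun J => J.comp (i.comp F)) '' M ⊆ {T : H →L[ℂ] H | IsCompactOperator (⇑T)} := by
    rintro _ ⟨J, hJ, rfl⟩
    exact (hcomp J hJ).comp_clm F
  exact isClosed_setOfPred_isCompactOperator.closure_subset_iff.mpr hJR
    (hMC.mem_closure_image_comp_of_mem_B0l hR)

end
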